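/- arXiv:2507.13706 — 5 statements merged into one kernel-verified Lean document; each statement's English description precedes it below -/
import Mathlib

section
/- The function defined on at-most-one-element sets by d(∅,∅)=0, d({x},{y}) = min(c, d_b(x,y)), d(∅,{y}) = ρ^{1/p} c, d({x},∅) = (1-ρ)^{1/p} c is a quasi-metric on the collection of subsets of X with at most one element, provided d_b is a quasi-metric, c > 0, ρ ∈ (0,1), and 1 ≤ p < ∞. -/
/-- A quasi-metric: nonnegative, identity of indiscernibles, triangle inequality,
but not necessarily symmetric. -/
def IsQuasiMetric {X : Type*} (d : X → X → ℝ) : Prop :=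
  (∀ x y, 0 ≤ d x y) ∧ (∀ x y, d x y = 0 ↔ x = y) ∧ (∀ x y z, d x y ≤ d x z + d z y)

/-- The base-case GOSPA quasi-metric on sets with at most one element (modelled as
`Option X`): `d(∅,∅)=0`, `d({x},{y}) = min(c, db x y)`, `d(∅,{y}) = ρ^{1/p} c`,
`d({x},∅) = (1-ρ)^{1/p} c`. -/
noncomputable def gospaBase {X : Type*} (db : X → X → ℝ) (c p ρ : ℝ) :
    Option X → Option X → ℝ
  | some x, some y => min c (db x y)
  | none, some _ => ρ ^ (1 / p) * c
  | some _, none => (1 - ρ) ^ (1 / p) * c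
  | none, none => 0

/-- The base-case GOSPA quasi-metric is a quasi-metric on the collection of
at-most-one-element subsets of `X`. -/
theorem gospaBase_isQuasiMetric {X : Type*} (db : X → X → ℝ) (hdb : IsQuasiMetric db)
    (c p ρ : ℝ) (hc : 0 < c) (hp : 1 ≤ p) (hρ : ρ ∈ Set.Ioo (0 : ℝ) 1) :
    IsQuasiMetric (gospaBase db c p ρ) := by
  obtain ⟨hnn, hid, htri⟩ := hdb
  obtain ⟨hρ0, hρ1⟩ := hρ
  have hp0 : (0 : ℝ) < p := lt_of_lt_of_le one_pos hp
  have hinv0 : (0 : ℝ) < 1 / p := by positivity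
  have hinv1 : 1 / p ≤ 1 := by
    rw [div_le_one hp0]; exact hp
  have ha0 : (0 : ℝ) < ρ ^ (1 / p) := Real.rpow_pos_of_pos hρ0 _
  have h1ρ : (0 : ℝ) < 1 - ρ := by linarith
  have hb0 : (0 : ℝ) < (1 - ρ) ^ (1 / p) := Real.rpow_pos_of_pos h1ρ _
  have hA : (0 : ℝ) < ρ ^ (1 / p) * c := mul_pos ha0 hc
  have hB : (0 : ℝ) < (1 - ρ) ^ (1 / p) * c := mul_pos hb0 hc
  have hsum : 1 ≤ ρ ^ (1 / p) + (1 - ρ) ^ (1 / p) := by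
    have h1 : ρ ≤ ρ ^ (1 / p) := by
      have := Real.rpow_le_rpow_of_exponent_ge hρ0 (le_of_lt hρ1) hinv1
      rwa [Real.rpow_one] at this
    have h2 : 1 - ρ ≤ (1 - ρ) ^ (1 / p) := by
      have := Real.rpow_le_rpow_of_exponent_ge h1ρ (by linarith) hinv1
      rwa [Real.rpow_one] at this
    linarith
  have hmin_nn : ∀ x y : X, 0 ≤ min c (db x y) := fun x y =>
    le_min (le_of_lt hc) (hnn x y)
  refine ⟨?_, ?_, ?_⟩
  · rintro (_ | x) (_ | y) <;> simp only [gospaBase] <;>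
      first
        | exact le_rfl
        | exact hA.le
        | exact hB.le
        | exact hmin_nn _ _
  · rintro (_ | x) (_ | y) <;> simp only [gospaBase]
    · exact iff_of_false hA.ne' (by simp)
    · exact iff_of_false hB.ne' (by simp)
    · rw [Option.some.injEq]
      constructor
      · intro h
        rcases min_cases c (db x y) with ⟨he, hle⟩ | ⟨he, hle⟩
        · exact absurd (he ▸ h) hc.ne'
        · exact (hid x y).mp (he ▸ h)
      · intro h
        subst h
        rw [(hid x x).mpr rfl]
        simp [hc.le]
  · rintro (_ | x) (_ | y) (_ | z) <;>
      simp only [gospaBase]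
    · simp
    · positivity
    · linarith
    · have := hmin_nn z y; linarith
    · linarith
    · have := hmin_nn x z; linarith
    · have h : min c (db x y) ≤ c := min_le_left _ _
      calc min c (db x y) ≤ c := h
        _ = 1 * c := (one_mul c).symm
        _ ≤ (ρ ^ (1 / p) + (1 - ρ) ^ (1 / p)) * c := by
            apply mul_le_mul_of_nonneg_right _ hc.le
            linarith
        _ = (1 - ρ) ^ (1 / p) * c + ρ ^ (1 / p) * c := by ring
    · rcases min_cases c (db x z) with ⟨he1, hle1⟩ | ⟨he1, hle1⟩
      · have := hmin_nn z y
        have : min c (db x y) ≤ c := min_le_left _ _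
        have := hmin_nn z y
        rw [he1]; linarith [min_le_left c (db x y), hmin_nn z y]
      · rcases min_cases c (db z y) with ⟨he2, hle2⟩ | ⟨he2, hle2⟩
        · rw [he2]; linarith [min_le_left c (db x y), hmin_nn x z]
        · rw [he1, he2]
          calc min c (db x y) ≤ db x y := min_le_right _ _
            _ ≤ db x z + db z y := htri x y z
end

section
/- The GOSPA quasi-metric satisfies the triangle inequality: for all finite sets 𝐱, 𝐲, 𝐳, d_p^{(c,ρ)}(𝐱,𝐲) ≤ d_p^{(c,ρ)}(𝐱,𝐳) + d_p^{(c,ρ)}(𝐳,𝐲). -/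
open Finset

/-- An assignment set: a partial one-to-one matching between indices. -/
def IsAssign {n m : ℕ} (θ : Finset (Fin n × Fin m)) : Prop :=
  ∀ a ∈ θ, ∀ b ∈ θ, (a.1 = b.1 ∨ a.2 = b.2) → a = b

lemma gospa_key {X : Type*} (db : X → X → ℝ) (hdb : IsQuasiMetric db)
    (c p ρ : ℝ) (hc : 0 < c) (hp : 1 ≤ p) (hρ : ρ ∈ Set.Ioo (0:ℝ) 1)
    {n l m : ℕ} (x : Fin n → X) (z : Fin l → X) (y : Fin m → X)
    (θ₁ : Finset (Fin n × Fin l)) (θ₂ : Finset (Fin l × Fin m))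
    (h1 : IsAssign θ₁) (h2 : IsAssign θ₂) :
    ∃ θ : Finset (Fin n × Fin m), IsAssign θ ∧
      ((∑ ij ∈ θ, db (x ij.1) (y ij.2) ^ p)
        + ρ * c ^ p * ((m : ℝ) - θ.card)
        + (1 - ρ) * c ^ p * ((n : ℝ) - θ.card)) ^ (1 / p)
      ≤ ((∑ ij ∈ θ₁, db (x ij.1) (z ij.2) ^ p)
        + ρ * c ^ p * ((l : ℝ) - θ₁.card)
        + (1 - ρ) * c ^ p * ((n : ℝ) - θ₁.card)) ^ (1 / p)
      + ((∑ ij ∈ θ₂, db (z ij.1) (y ij.2) ^ p)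
        + ρ * c ^ p * ((m : ℝ) - θ₂.card)
        + (1 - ρ) * c ^ p * ((l : ℝ) - θ₂.card)) ^ (1 / p) := by
  obtain ⟨hd0, -, hdtri⟩ := hdb
  obtain ⟨hρ0, hρ1⟩ := hρ
  have hp0 : (0:ℝ) < p := lt_of_lt_of_le one_pos hp
  have hp0' : p ≠ 0 := ne_of_gt hp0
  have hcp : (0:ℝ) < c ^ p := Real.rpow_pos_of_pos hc p
  have hρ1' : (0:ℝ) ≤ 1 - ρ := by linarith
  have hrp : ∀ w : ℝ, 0 ≤ w → (w ^ (1/p)) ^ p = w := fun w hw => by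
    rw [← Real.rpow_mul hw, one_div_mul_cancel hp0', Real.rpow_one]
  classical
  set Γ : Finset ((Fin n × Fin l) × (Fin l × Fin m)) :=
    (θ₁ ×ˢ θ₂).filter (fun q => q.1.2 = q.2.1) with hΓ
  have hmemΓ : ∀ q, q ∈ Γ ↔ q.1 ∈ θ₁ ∧ q.2 ∈ θ₂ ∧ q.1.2 = q.2.1 := by
    intro q; simp [hΓ, Finset.mem_filter, Finset.mem_product, and_assoc]
  -- master injectivity on Γ
  have hkey : ∀ q ∈ Γ, ∀ q' ∈ Γ, (q.1.1 = q'.1.1 ∨ q.1.2 = q'.1.2 ∨ q.2.2 = q'.2.2) →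
      q = q' := by
    intro q hq q' hq' hor
    obtain ⟨hq1, hq2, hqe⟩ := (hmemΓ q).1 hq
    obtain ⟨hq1', hq2', hqe'⟩ := (hmemΓ q').1 hq'
    have h11 : q.1 = q'.1 → q = q' := by
      intro he
      have h22 : q.2 = q'.2 := h2 q.2 hq2 q'.2 hq2' (Or.inl (by rw [← hqe, ← hqe', he]))
      exact Prod.ext he h22
    rcases hor with h | h | h
    · exact h11 (h1 q.1 hq1 q'.1 hq1' (Or.inl h))
    · exact h11 (h1 q.1 hq1 q'.1 hq1' (Or.inr h))
    · have h22 : q.2 = q'.2 := h2 q.2 hq2 q'.2 hq2' (Or.inr h)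
      exact h11 (h1 q.1 hq1 q'.1 hq1' (Or.inr (by rw [hqe, hqe', h22])))
  set θ : Finset (Fin n × Fin m) := Γ.image (fun q => (q.1.1, q.2.2)) with hθ
  have hassign : IsAssign θ := by
    intro a ha b hb hab
    obtain ⟨q, hq, rfl⟩ := Finset.mem_image.1 ha
    obtain ⟨q', hq', rfl⟩ := Finset.mem_image.1 hb
    have : q = q' := by
      apply hkey q hq q' hq'
      rcases hab with h | h
      · exact Or.inl h
      · exact Or.inr (Or.inr h)
    rw [this]
  refine ⟨θ, hassign, ?_⟩
  have hinjθ : Set.InjOn (fun q : (Fin n × Fin l) × (Fin l × Fin m) => (q.1.1, q.2.2)) Γ := by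
    intro q hq q' hq' h
    simp only [Prod.mk.injEq] at h
    exact hkey q hq q' hq' (Or.inl h.1)
  have hcardθ : θ.card = Γ.card := Finset.card_image_of_injOn hinjθ
  -- abbreviations
  set a := θ₁.card
  set b := θ₂.card
  set t := Γ.card
  -- card facts
  have htlea : t ≤ a := by
    have hsub : Γ.image Prod.fst ⊆ θ₁ := by
      intro u hu; obtain ⟨q, hq, rfl⟩ := Finset.mem_image.1 hu
      exact ((hmemΓ q).1 hq).1
    calc t = (Γ.image Prod.fst).card := (Finset.card_image_of_injOn
          (fun q hq q' hq' h => hkey q hq q' hq' (Or.inl (congrArg Prod.fst h)))).symm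
      _ ≤ a := Finset.card_le_card hsub
  have htleb : t ≤ b := by
    have hsub : Γ.image Prod.snd ⊆ θ₂ := by
      intro u hu; obtain ⟨q, hq, rfl⟩ := Finset.mem_image.1 hu
      exact ((hmemΓ q).1 hq).2.1
    calc t = (Γ.image Prod.snd).card := (Finset.card_image_of_injOn
          (fun q hq q' hq' h => hkey q hq q' hq' (Or.inr (Or.inr (congrArg Prod.snd h))))).symm
      _ ≤ b := Finset.card_le_card hsub
  have halen : a ≤ n := by
    calc a = (θ₁.image Prod.fst).card := (Finset.card_image_of_injOn
          (fun q hq q' hq' h => h1 q hq q' hq' (Or.inl h))).symm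
      _ ≤ n := by simpa using Finset.card_le_card (Finset.subset_univ (θ₁.image Prod.fst))
  have hblem : b ≤ m := by
    calc b = (θ₂.image Prod.snd).card := (Finset.card_image_of_injOn
          (fun q hq q' hq' h => h2 q hq q' hq' (Or.inr h))).symm
      _ ≤ m := by simpa using Finset.card_le_card (Finset.subset_univ (θ₂.image Prod.snd))
  have hablt : a + b ≤ l + t := by
    set S₁ := θ₁.image Prod.snd with hS₁def
    set S₂ := θ₂.image Prod.fst with hS₂def
    have hS₁ : S₁.card = a := Finset.card_image_of_injOn
      (fun q hq q' hq' h => h1 q hq q' hq' (Or.inr h))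
    have hS₂ : S₂.card = b := Finset.card_image_of_injOn
      (fun q hq q' hq' h => h2 q hq q' hq' (Or.inl h))
    have hint : S₁ ∩ S₂ = Γ.image (fun q => q.1.2) := by
      ext k
      simp only [Finset.mem_inter, Finset.mem_image, hS₁def, hS₂def]
      constructor
      · rintro ⟨⟨u, hu, hu2⟩, ⟨v, hv, hv1⟩⟩
        refine ⟨(u, v), (hmemΓ (u, v)).2 ⟨hu, hv, by simp [hu2, hv1]⟩, hu2⟩
      · rintro ⟨q, hq, rfl⟩
        obtain ⟨hq1, hq2, hqe⟩ := (hmemΓ q).1 hq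
        exact ⟨⟨q.1, hq1, rfl⟩, ⟨q.2, hq2, hqe.symm⟩⟩
    have hintcard : (S₁ ∩ S₂).card = t := by
      rw [hint]
      exact Finset.card_image_of_injOn
        (fun q hq q' hq' h => hkey q hq q' hq' (Or.inr (Or.inl h)))
    have hul : (S₁ ∪ S₂).card ≤ l := by
      simpa using Finset.card_le_card (Finset.subset_univ (S₁ ∪ S₂))
    have := Finset.card_union_add_card_inter S₁ S₂
    omega
  -- nonneg scalars
  have hbt0 : (0:ℝ) ≤ ρ * c ^ p * ((b:ℝ) - t) :=
    mul_nonneg (mul_nonneg hρ0.le hcp.le) (sub_nonneg.2 (by exact_mod_cast htleb))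
  have hna0 : (0:ℝ) ≤ (1 - ρ) * c ^ p * ((n:ℝ) - a) :=
    mul_nonneg (mul_nonneg hρ1' hcp.le) (sub_nonneg.2 (by exact_mod_cast halen))
  have hmb0 : (0:ℝ) ≤ ρ * c ^ p * ((m:ℝ) - b) :=
    mul_nonneg (mul_nonneg hρ0.le hcp.le) (sub_nonneg.2 (by exact_mod_cast hblem))
  have hat0 : (0:ℝ) ≤ (1 - ρ) * c ^ p * ((a:ℝ) - t) :=
    mul_nonneg (mul_nonneg hρ1' hcp.le) (sub_nonneg.2 (by exact_mod_cast htlea))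
  -- Minkowski vectors
  set u : ((Fin n × Fin l) × (Fin l × Fin m)) ⊕ Fin 4 → ℝ := Sum.elim
    (fun q => db (x q.1.1) (z q.1.2))
    ![(ρ * c ^ p * ((b:ℝ) - t)) ^ (1/p), 0, 0,
      ((1 - ρ) * c ^ p * ((n:ℝ) - a)) ^ (1/p)] with hudef
  set v : ((Fin n × Fin l) × (Fin l × Fin m)) ⊕ Fin 4 → ℝ := Sum.elim
    (fun q => db (z q.2.1) (y q.2.2))
    ![0, (ρ * c ^ p * ((m:ℝ) - b)) ^ (1/p),
      ((1 - ρ) * c ^ p * ((a:ℝ) - t)) ^ (1/p), 0] with hvdef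
  set s : Finset (((Fin n × Fin l) × (Fin l × Fin m)) ⊕ Fin 4) :=
    Γ.disjSum Finset.univ with hsdef
  have hu0 : ∀ i, 0 ≤ u i := by
    rintro (q | i)
    · exact hd0 _ _
    · simp only [hudef, Sum.elim_inr]
      fin_cases i <;> simp <;>
        first | exact Real.rpow_nonneg hbt0 _ | exact Real.rpow_nonneg hna0 _
  have hv0 : ∀ i, 0 ≤ v i := by
    rintro (q | i)
    · exact hd0 _ _
    · simp only [hvdef, Sum.elim_inr]
      fin_cases i <;> simp <;>
        first | exact Real.rpow_nonneg hmb0 _ | exact Real.rpow_nonneg hat0 _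
  -- sum computations
  have hz0 : |(0:ℝ)| ^ p = 0 := by rw [abs_zero]; exact Real.zero_rpow hp0'
  have hsum_u : ∑ i ∈ s, |u i| ^ p
      = (∑ q ∈ Γ, db (x q.1.1) (z q.1.2) ^ p)
        + (ρ * c ^ p * ((b:ℝ) - t) + (1 - ρ) * c ^ p * ((n:ℝ) - a)) := by
    rw [hsdef, Finset.sum_disjSum]
    congr 1
    · exact Finset.sum_congr rfl fun q _ => by
        simp only [hudef, Sum.elim_inl]
        rw [abs_of_nonneg (hd0 _ _)]
    · rw [Fin.sum_univ_four]
      simp only [hudef, Sum.elim_inr, Matrix.cons_val_zero, Matrix.cons_val_one,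
        Matrix.head_cons, Matrix.cons_val_two, Matrix.tail_cons, Matrix.cons_val_three]
      rw [abs_of_nonneg (Real.rpow_nonneg hbt0 _), abs_of_nonneg (Real.rpow_nonneg hna0 _),
        hrp _ hbt0, hrp _ hna0, hz0]
      ring
  have hsum_v : ∑ i ∈ s, |v i| ^ p
      = (∑ q ∈ Γ, db (z q.2.1) (y q.2.2) ^ p)
        + (ρ * c ^ p * ((m:ℝ) - b) + (1 - ρ) * c ^ p * ((a:ℝ) - t)) := by
    rw [hsdef, Finset.sum_disjSum]
    congr 1
    · exact Finset.sum_congr rfl fun q _ => by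
        simp only [hvdef, Sum.elim_inl]
        rw [abs_of_nonneg (hd0 _ _)]
    · rw [Fin.sum_univ_four]
      simp only [hvdef, Sum.elim_inr, Matrix.cons_val_zero, Matrix.cons_val_one,
        Matrix.head_cons, Matrix.cons_val_two, Matrix.tail_cons, Matrix.cons_val_three]
      rw [abs_of_nonneg (Real.rpow_nonneg hmb0 _), abs_of_nonneg (Real.rpow_nonneg hat0 _),
        hrp _ hmb0, hrp _ hat0, hz0]
      ring
  
  -- sum over θ equals sum over Γ
  have hθsum : ∑ ij ∈ θ, db (x ij.1) (y ij.2) ^ p = ∑ q ∈ Γ, db (x q.1.1) (y q.2.2) ^ p := by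
    rw [hθ]
    exact Finset.sum_image (fun q hq q' hq' h => hinjθ hq hq' h)
  -- the combined cost is dominated by the Minkowski sum
  have huv : ∑ i ∈ s, |u i + v i| ^ p
      = (∑ q ∈ Γ, (db (x q.1.1) (z q.1.2) + db (z q.2.1) (y q.2.2)) ^ p)
        + (ρ * c ^ p * ((b:ℝ) - t) + ρ * c ^ p * ((m:ℝ) - b)
          + (1 - ρ) * c ^ p * ((a:ℝ) - t) + (1 - ρ) * c ^ p * ((n:ℝ) - a)) := by
    rw [hsdef, Finset.sum_disjSum]
    congr 1
    · exact Finset.sum_congr rfl fun q _ => by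
        simp only [hudef, hvdef, Sum.elim_inl]
        rw [abs_of_nonneg (add_nonneg (hd0 _ _) (hd0 _ _))]
    · rw [Fin.sum_univ_four]
      simp only [hudef, hvdef, Sum.elim_inr, Matrix.cons_val_zero, Matrix.cons_val_one,
        Matrix.head_cons, Matrix.cons_val_two, Matrix.tail_cons, Matrix.cons_val_three,
        add_zero, zero_add]
      rw [abs_of_nonneg (Real.rpow_nonneg hbt0 _), abs_of_nonneg (Real.rpow_nonneg hna0 _),
        abs_of_nonneg (Real.rpow_nonneg hmb0 _), abs_of_nonneg (Real.rpow_nonneg hat0 _),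
        hrp _ hbt0, hrp _ hna0, hrp _ hmb0, hrp _ hat0]
      try ring
  have hcost_le : (∑ ij ∈ θ, db (x ij.1) (y ij.2) ^ p)
      + ρ * c ^ p * ((m : ℝ) - θ.card) + (1 - ρ) * c ^ p * ((n : ℝ) - θ.card)
      ≤ ∑ i ∈ s, |u i + v i| ^ p := by
    rw [huv, hθsum, hcardθ]
    have hterm : ∀ q ∈ Γ, db (x q.1.1) (y q.2.2) ^ p
        ≤ (db (x q.1.1) (z q.1.2) + db (z q.2.1) (y q.2.2)) ^ p := by
      intro q hq
      obtain ⟨-, -, hqe⟩ := (hmemΓ q).1 hq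
      refine Real.rpow_le_rpow (hd0 _ _) ?_ hp0.le
      calc db (x q.1.1) (y q.2.2)
          ≤ db (x q.1.1) (z q.1.2) + db (z q.1.2) (y q.2.2) := hdtri _ _ _
        _ = db (x q.1.1) (z q.1.2) + db (z q.2.1) (y q.2.2) := by rw [hqe]
    have hsums := Finset.sum_le_sum hterm
    have hpen : ρ * c ^ p * ((m:ℝ) - t) + (1 - ρ) * c ^ p * ((n:ℝ) - t)
        = ρ * c ^ p * ((b:ℝ) - t) + ρ * c ^ p * ((m:ℝ) - b)
          + (1 - ρ) * c ^ p * ((a:ℝ) - t) + (1 - ρ) * c ^ p * ((n:ℝ) - a) := by ring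
    linarith
  -- compare with the two costs
  have hfinal_u : ∑ i ∈ s, |u i| ^ p
      ≤ (∑ ij ∈ θ₁, db (x ij.1) (z ij.2) ^ p)
        + ρ * c ^ p * ((l : ℝ) - a) + (1 - ρ) * c ^ p * ((n : ℝ) - a) := by
    rw [hsum_u]
    have hΓ1 : ∑ q ∈ Γ, db (x q.1.1) (z q.1.2) ^ p
        ≤ ∑ ij ∈ θ₁, db (x ij.1) (z ij.2) ^ p := by
      have he : ∑ ij ∈ Γ.image Prod.fst, db (x ij.1) (z ij.2) ^ p
          = ∑ q ∈ Γ, db (x q.1.1) (z q.1.2) ^ p :=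
        Finset.sum_image (fun q hq q' hq' h =>
          hkey q hq q' hq' (Or.inl (congrArg Prod.fst h)))
      rw [← he]
      refine Finset.sum_le_sum_of_subset_of_nonneg ?_
        (fun i _ _ => Real.rpow_nonneg (hd0 _ _) _)
      intro i hi
      obtain ⟨q, hq, rfl⟩ := Finset.mem_image.1 hi
      exact ((hmemΓ q).1 hq).1
    have hpen : ρ * c ^ p * ((b:ℝ) - t) ≤ ρ * c ^ p * ((l:ℝ) - a) := by
      refine mul_le_mul_of_nonneg_left ?_ (mul_nonneg hρ0.le hcp.le)
      have : (a:ℝ) + b ≤ (l:ℝ) + t := by exact_mod_cast hablt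
      linarith
    linarith
  have hfinal_v : ∑ i ∈ s, |v i| ^ p
      ≤ (∑ ij ∈ θ₂, db (z ij.1) (y ij.2) ^ p)
        + ρ * c ^ p * ((m : ℝ) - b) + (1 - ρ) * c ^ p * ((l : ℝ) - b) := by
    rw [hsum_v]
    have hΓ2 : ∑ q ∈ Γ, db (z q.2.1) (y q.2.2) ^ p
        ≤ ∑ ij ∈ θ₂, db (z ij.1) (y ij.2) ^ p := by
      have he : ∑ ij ∈ Γ.image Prod.snd, db (z ij.1) (y ij.2) ^ p
          = ∑ q ∈ Γ, db (z q.2.1) (y q.2.2) ^ p :=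
        Finset.sum_image (fun q hq q' hq' h =>
          hkey q hq q' hq' (Or.inr (Or.inr (congrArg Prod.snd h))))
      rw [← he]
      refine Finset.sum_le_sum_of_subset_of_nonneg ?_
        (fun i _ _ => Real.rpow_nonneg (hd0 _ _) _)
      intro i hi
      obtain ⟨q, hq, rfl⟩ := Finset.mem_image.1 hi
      exact ((hmemΓ q).1 hq).2.1
    have hpen : (1 - ρ) * c ^ p * ((a:ℝ) - t) ≤ (1 - ρ) * c ^ p * ((l:ℝ) - b) := by
      refine mul_le_mul_of_nonneg_left ?_ (mul_nonneg hρ1' hcp.le)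
      have : (a:ℝ) + b ≤ (l:ℝ) + t := by exact_mod_cast hablt
      linarith
    linarith
  -- nonnegativity of the various bases
  have hCxy0 : 0 ≤ (∑ ij ∈ θ, db (x ij.1) (y ij.2) ^ p)
      + ρ * c ^ p * ((m : ℝ) - θ.card) + (1 - ρ) * c ^ p * ((n : ℝ) - θ.card) := by
    have h1' : (0:ℝ) ≤ ρ * c ^ p * ((m : ℝ) - θ.card) := by
      rw [hcardθ]
      refine mul_nonneg (mul_nonneg hρ0.le hcp.le) (sub_nonneg.2 ?_)
      exact_mod_cast le_trans htleb hblem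
    have h2' : (0:ℝ) ≤ (1 - ρ) * c ^ p * ((n : ℝ) - θ.card) := by
      rw [hcardθ]
      refine mul_nonneg (mul_nonneg hρ1' hcp.le) (sub_nonneg.2 ?_)
      exact_mod_cast le_trans htlea halen
    have h3' : (0:ℝ) ≤ ∑ ij ∈ θ, db (x ij.1) (y ij.2) ^ p :=
      Finset.sum_nonneg fun ij _ => Real.rpow_nonneg (hd0 _ _) _
    linarith
  have hu_nonneg : (0:ℝ) ≤ ∑ i ∈ s, |u i| ^ p :=
    Finset.sum_nonneg fun i _ => Real.rpow_nonneg (abs_nonneg _) _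
  have hv_nonneg : (0:ℝ) ≤ ∑ i ∈ s, |v i| ^ p :=
    Finset.sum_nonneg fun i _ => Real.rpow_nonneg (abs_nonneg _) _
  have hp_inv : (0:ℝ) ≤ 1 / p := by positivity
  calc ((∑ ij ∈ θ, db (x ij.1) (y ij.2) ^ p)
        + ρ * c ^ p * ((m : ℝ) - θ.card) + (1 - ρ) * c ^ p * ((n : ℝ) - θ.card)) ^ (1 / p)
      ≤ (∑ i ∈ s, |u i + v i| ^ p) ^ (1 / p) :=
        Real.rpow_le_rpow hCxy0 hcost_le hp_inv
    _ ≤ (∑ i ∈ s, |u i| ^ p) ^ (1 / p) + (∑ i ∈ s, |v i| ^ p) ^ (1 / p) :=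
        Real.Lp_add_le s u v hp
    _ ≤ _ := add_le_add (Real.rpow_le_rpow hu_nonneg hfinal_u hp_inv)
        (Real.rpow_le_rpow hv_nonneg hfinal_v hp_inv)

/-- The GOSPA quasi-metric with base quasi-metric `db`, cut-off `c`, exponent `p`
and asymmetry parameter `ρ`, between the finite sets represented by `x` and `y`. -/
noncomputable def gospa {X : Type*} (db : X → X → ℝ) (c p ρ : ℝ) {n m : ℕ}
    (x : Fin n → X) (y : Fin m → X) : ℝ :=
  letI := Classical.decPred (IsAssign (n := n) (m := m))
  (Finset.univ.filter IsAssign).inf' ⟨∅, by simp [IsAssign]⟩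
    (fun θ => ((∑ ij ∈ θ, db (x ij.1) (y ij.2) ^ p)
      + ρ * c ^ p * ((m : ℝ) - θ.card)
      + (1 - ρ) * c ^ p * ((n : ℝ) - θ.card)) ^ (1 / p))

/-- Triangle inequality of the GOSPA quasi-metric. -/
theorem gospa_triangle {X : Type*} (db : X → X → ℝ) (hdb : IsQuasiMetric db)
    (c p ρ : ℝ) (hc : 0 < c) (hp : 1 ≤ p) (hρ : ρ ∈ Set.Ioo (0 : ℝ) 1)
    {n l m : ℕ} (x : Fin n → X) (z : Fin l → X) (y : Fin m → X)
    (hx : Function.Injective x) (hz : Function.Injective z) (hy : Function.Injective y) :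
    gospa db c p ρ x y ≤ gospa db c p ρ x z + gospa db c p ρ z y := by
  classical
  letI : DecidablePred (IsAssign (n := n) (m := l)) := Classical.decPred _
  letI : DecidablePred (IsAssign (n := l) (m := m)) := Classical.decPred _
  letI : DecidablePred (IsAssign (n := n) (m := m)) := Classical.decPred _
  unfold gospa
  obtain ⟨θ₁, hm1, he1⟩ := Finset.exists_mem_eq_inf'
    (s := Finset.univ.filter (IsAssign (n := n) (m := l)))
    (⟨∅, by simp [IsAssign]⟩)
    (fun θ => ((∑ ij ∈ θ, db (x ij.1) (z ij.2) ^ p)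
      + ρ * c ^ p * ((l : ℝ) - θ.card)
      + (1 - ρ) * c ^ p * ((n : ℝ) - θ.card)) ^ (1 / p))
  obtain ⟨θ₂, hm2, he2⟩ := Finset.exists_mem_eq_inf'
    (s := Finset.univ.filter (IsAssign (n := l) (m := m)))
    (⟨∅, by simp [IsAssign]⟩)
    (fun θ => ((∑ ij ∈ θ, db (z ij.1) (y ij.2) ^ p)
      + ρ * c ^ p * ((m : ℝ) - θ.card)
      + (1 - ρ) * c ^ p * ((l : ℝ) - θ.card)) ^ (1 / p))
  rw [he1, he2]
  obtain ⟨θ, hθa, hθle⟩ := gospa_key db hdb c p ρ hc hp hρ x z y θ₁ θ₂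
    ((Finset.mem_filter.1 hm1).2) ((Finset.mem_filter.1 hm2).2)
  refine le_trans (Finset.inf'_le _ (Finset.mem_filter.2 ⟨Finset.mem_univ _, hθa⟩)) hθle
end

section
/- Permutation form of the GOSPA quasi-metric: if |𝐲| ≥ |𝐱|, then d_p^{(c,ρ)}(𝐱,𝐲) = min over permutations π of {1,...,|𝐲|} of ( ∑_{i=1}^{|𝐱|} min(c, d_b(x_i, y_{π(i)}))^p + ρ c^p (|𝐲|−|𝐱|) )^{1/p}. -/
open Finset

/-- Any assignment set can be extended to a permutation of `Fin m`. -/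
lemma exists_perm_of_assign {n m : ℕ} (hnm : n ≤ m) {θ : Finset (Fin n × Fin m)}
    (hθ : IsAssign θ) :
    ∃ π : Equiv.Perm (Fin m), ∀ q ∈ θ, π (Fin.castLE hnm q.1) = q.2 := by
  classical
  set fA : θ → Fin m := fun q => Fin.castLE hnm q.1.1 with hfA_def
  set fB : θ → Fin m := fun q => q.1.2 with hfB_def
  have hfA : Function.Injective fA := by
    intro a b hab
    exact Subtype.ext (hθ _ a.2 _ b.2 (Or.inl (Fin.castLE_injective hnm hab)))
  have hfB : Function.Injective fB := by
    intro a b hab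
    exact Subtype.ext (hθ _ a.2 _ b.2 (Or.inr hab))
  refine ⟨((Equiv.ofInjective fA hfA).symm.trans (Equiv.ofInjective fB hfB)).extendSubtype, ?_⟩
  intro q hq
  have hmem : Fin.castLE hnm q.1 ∈ Set.range fA := ⟨⟨q, hq⟩, rfl⟩
  rw [Equiv.extendSubtype_apply_of_mem _ _ hmem]
  have h1 : (⟨Fin.castLE hnm q.1, hmem⟩ : {a : Fin m // a ∈ Set.range fA})
      = Equiv.ofInjective fA hfA ⟨q, hq⟩ := rfl
  rw [h1, Equiv.trans_apply, Equiv.symm_apply_apply]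
  rfl

/-- Permutation form of the GOSPA quasi-metric when `|y| ≥ |x|`. -/
theorem gospa_perm_form {X : Type*} (db : X → X → ℝ) (hdb : IsQuasiMetric db)
    (c p ρ : ℝ) (hc : 0 < c) (hp : 1 ≤ p) (hρ : ρ ∈ Set.Ioo (0 : ℝ) 1)
    {n m : ℕ} (hnm : n ≤ m) (x : Fin n → X) (y : Fin m → X) :
    gospa db c p ρ x y =
      Finset.univ.inf' Finset.univ_nonempty (fun π : Equiv.Perm (Fin m) =>
        ((∑ i : Fin n, min c (db (x i) (y (π (Fin.castLE hnm i)))) ^ p)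
          + ρ * c ^ p * ((m : ℝ) - (n : ℝ))) ^ (1 / p)) := by
  classical
  have hp0 : (0:ℝ) < p := lt_of_lt_of_le one_pos hp
  have hcp : (0:ℝ) < c ^ p := Real.rpow_pos_of_pos hc p
  unfold gospa
  apply le_antisymm
  · -- LHS ≤ RHS : for each π construct θπ
    apply Finset.le_inf'
    intro π _
    set s : Finset (Fin n) :=
      Finset.univ.filter (fun i => db (x i) (y (π (Fin.castLE hnm i))) ≤ c) with hs_def
    set θπ : Finset (Fin n × Fin m) := s.image (fun i => (i, π (Fin.castLE hnm i))) with hθπ_def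
    have hinj : ∀ a ∈ s, ∀ b ∈ s, (fun i => (i, π (Fin.castLE hnm i))) a
        = (fun i => (i, π (Fin.castLE hnm i))) b → a = b := by
      intro a _ b _ h
      exact congrArg Prod.fst h
    have hassign : IsAssign θπ := by
      intro a ha b hb hab
      obtain ⟨i, hi, rfl⟩ := Finset.mem_image.1 ha
      obtain ⟨j, hj, rfl⟩ := Finset.mem_image.1 hb
      rcases hab with h | h
      · have hij : i = j := h
        subst hij; rfl
      · have hij : i = j := Fin.castLE_injective hnm (π.injective h)
        subst hij; rfl
    have hmemθ : θπ ∈ Finset.univ.filter (IsAssign (n := n) (m := m)) := by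
      simp only [Finset.mem_filter, Finset.mem_univ, true_and]
      exact hassign
    refine le_trans (Finset.inf'_le _ hmemθ) (le_of_eq ?_)
    congr 1
    have hsum : ∑ ij ∈ θπ, db (x ij.1) (y ij.2) ^ p
        = ∑ i ∈ s, db (x i) (y (π (Fin.castLE hnm i))) ^ p :=
      Finset.sum_image hinj
    have hcard : θπ.card = s.card := Finset.card_image_of_injOn
      (fun a ha b hb h => hinj a ha b hb h)
    have hsplit : ∑ i : Fin n, min c (db (x i) (y (π (Fin.castLE hnm i)))) ^ p
        = ∑ i ∈ s, db (x i) (y (π (Fin.castLE hnm i))) ^ p + (↑(n - s.card)) * c ^ p := by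
      rw [← Finset.sum_filter_add_sum_filter_not Finset.univ
        (fun i => db (x i) (y (π (Fin.castLE hnm i))) ≤ c)]
      congr 1
      · apply Finset.sum_congr rfl
        intro i hi
        rw [min_eq_right (Finset.mem_filter.1 hi).2]
      · have hcardneg : (Finset.univ.filter
            (fun i => ¬ db (x i) (y (π (Fin.castLE hnm i))) ≤ c)).card = n - s.card := by
          have := Finset.card_filter_add_card_filter_not
            (s := (Finset.univ : Finset (Fin n)))
            (fun i => db (x i) (y (π (Fin.castLE hnm i))) ≤ c)
          simp only [Finset.card_univ, Fintype.card_fin] at this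
          rw [hs_def]
          omega
        rw [Finset.sum_congr rfl (fun i hi => by
            rw [min_eq_left (le_of_lt (lt_of_not_ge (Finset.mem_filter.1 hi).2))]),
          Finset.sum_const, hcardneg, nsmul_eq_mul]
    have hkn : s.card ≤ n := le_trans (Finset.card_le_univ s) (by simp)
    rw [hsum, hcard, hsplit]
    push_cast [Nat.cast_sub hkn]
    ring
  · -- RHS ≤ LHS : for each θ construct π
    apply Finset.le_inf'
    intro θ hθmem
    have hθ : IsAssign θ := (Finset.mem_filter.1 hθmem).2
    obtain ⟨π, hπ⟩ := exists_perm_of_assign hnm hθ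
    refine le_trans (Finset.inf'_le _ (Finset.mem_univ π)) ?_
    apply Real.rpow_le_rpow
    · apply add_nonneg
      · apply Finset.sum_nonneg
        intro i _
        exact Real.rpow_nonneg (le_min hc.le (hdb.1 _ _)) p
      · apply mul_nonneg (mul_nonneg hρ.1.le hcp.le)
        have : (n:ℝ) ≤ m := Nat.cast_le.2 hnm
        linarith
    · -- inner inequality
      set M : Finset (Fin n) := θ.image Prod.fst with hM_def
      have hinjfst : ∀ a ∈ θ, ∀ b ∈ θ, a.1 = b.1 → a = b :=
        fun a ha b hb h => hθ a ha b hb (Or.inl h)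
      have hcardM : M.card = θ.card := Finset.card_image_of_injOn
        (fun a ha b hb h => hinjfst a ha b hb h)
      have hkn : θ.card ≤ n := by
        rw [← hcardM]; exact le_trans (Finset.card_le_univ M) (by simp)
      have hsplit : ∑ i : Fin n, min c (db (x i) (y (π (Fin.castLE hnm i)))) ^ p
          = ∑ i ∈ M, min c (db (x i) (y (π (Fin.castLE hnm i)))) ^ p
            + ∑ i ∈ Mᶜ, min c (db (x i) (y (π (Fin.castLE hnm i)))) ^ p :=
        (Finset.sum_add_sum_compl M _).symm
      have hM_le : ∑ i ∈ M, min c (db (x i) (y (π (Fin.castLE hnm i)))) ^ p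
          ≤ ∑ ij ∈ θ, db (x ij.1) (y ij.2) ^ p := by
        rw [hM_def, Finset.sum_image hinjfst]
        apply Finset.sum_le_sum
        intro q hq
        rw [hπ q hq]
        exact Real.rpow_le_rpow (le_min hc.le (hdb.1 _ _)) (min_le_right _ _) hp0.le
      have hMc_le : ∑ i ∈ Mᶜ, min c (db (x i) (y (π (Fin.castLE hnm i)))) ^ p
          ≤ (↑(n - θ.card)) * c ^ p := by
        calc ∑ i ∈ Mᶜ, min c (db (x i) (y (π (Fin.castLE hnm i)))) ^ p
            ≤ ∑ _i ∈ Mᶜ, c ^ p := by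
              apply Finset.sum_le_sum
              intro i _
              exact Real.rpow_le_rpow (le_min hc.le (hdb.1 _ _)) (min_le_left _ _) hp0.le
          _ = (↑(n - θ.card)) * c ^ p := by
              rw [Finset.sum_const, nsmul_eq_mul]
              congr 2
              rw [Finset.card_compl, hcardM]
              simp
      have hcast : ((n - θ.card : ℕ) : ℝ) = (n:ℝ) - θ.card := by
        push_cast [Nat.cast_sub hkn]; ring
      rw [hsplit]
      have hfinal : ρ * c ^ p * ((m:ℝ) - θ.card) + (1 - ρ) * c ^ p * ((n:ℝ) - θ.card)
          = ρ * c ^ p * ((m:ℝ) - n) + ((n:ℝ) - θ.card) * c ^ p := by ring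
      have := add_le_add hM_le hMc_le
      rw [hcast] at this
      linarith
    · positivity
end

section
/- Symmetrisation of the GOSPA quasi-metric: if d_b is a metric, then for any ρ ∈ (0,1), d_p^{(c,1/2)}(𝐱,𝐲) = [ (1/2)( d_p^{(c,ρ)}(𝐱,𝐲)^p + d_p^{(c,ρ)}(𝐲,𝐱)^p ) ]^{1/p}, where d_p^{(c,1/2)} is the GOSPA metric. -/
open Finset

noncomputable def Tset (n m : ℕ) : Finset (Finset (Fin n × Fin m)) :=
  letI := Classical.decPred (IsAssign (n := n) (m := m))
  Finset.univ.filter IsAssign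

lemma Tset_ne (n m : ℕ) : (Tset n m).Nonempty :=
  ⟨∅, by simp [Tset, IsAssign]⟩

lemma mem_Tset {n m : ℕ} (θ : Finset (Fin n × Fin m)) : θ ∈ Tset n m ↔ IsAssign θ := by
  classical
  simp [Tset]

noncomputable def Fcost {X : Type*} (db : X → X → ℝ) (c p : ℝ) {n m : ℕ}
    (x : Fin n → X) (y : Fin m → X) (θ : Finset (Fin n × Fin m)) : ℝ :=
  (∑ ij ∈ θ, db (x ij.1) (y ij.2) ^ p) - c ^ p * θ.card

lemma assign_card_le_left {n m : ℕ} (θ : Finset (Fin n × Fin m)) (hθ : IsAssign θ) :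
    θ.card ≤ n := by
  classical
  have h : (θ.image Prod.fst).card = θ.card :=
    Finset.card_image_of_injOn (fun a ha b hb hab => hθ a ha b hb (Or.inl hab))
  calc θ.card = (θ.image Prod.fst).card := h.symm
    _ ≤ (Finset.univ : Finset (Fin n)).card := Finset.card_le_univ _
    _ = n := by simp

lemma assign_card_le_right {n m : ℕ} (θ : Finset (Fin n × Fin m)) (hθ : IsAssign θ) :
    θ.card ≤ m := by
  classical
  have h : (θ.image Prod.snd).card = θ.card :=
    Finset.card_image_of_injOn (fun a ha b hb hab => hθ a ha b hb (Or.inr hab))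
  calc θ.card = (θ.image Prod.snd).card := h.symm
    _ ≤ (Finset.univ : Finset (Fin m)).card := Finset.card_le_univ _
    _ = m := by simp

lemma my_inf'_add_const {α : Type*} (s : Finset α) (hs : s.Nonempty) (f : α → ℝ) (k : ℝ) :
    s.inf' hs (fun a => f a + k) = s.inf' hs f + k := by
  apply le_antisymm
  · obtain ⟨a, ha, hae⟩ := Finset.exists_mem_eq_inf' hs f
    rw [hae]
    exact Finset.inf'_le _ ha
  · exact Finset.le_inf' _ _ fun b hb => add_le_add_left (Finset.inf'_le _ hb) k

lemma my_inf'_rpow {α : Type*} (s : Finset α) (hs : s.Nonempty) (f : α → ℝ)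
    (hf : ∀ a ∈ s, 0 ≤ f a) (q : ℝ) (hq : 0 ≤ q) :
    s.inf' hs (fun a => f a ^ q) = (s.inf' hs f) ^ q := by
  obtain ⟨a, ha, hae⟩ := Finset.exists_mem_eq_inf' hs f
  apply le_antisymm
  · rw [hae]
    exact Finset.inf'_le _ ha
  · exact Finset.le_inf' _ _ fun b hb =>
      Real.rpow_le_rpow (hae ▸ hf a ha) (Finset.inf'_le _ hb) hq

lemma cost_nonneg {X : Type*} (db : X → X → ℝ) (hdb : ∀ a b, 0 ≤ db a b)
    (c p ρ : ℝ) (hc : 0 < c) (hρ0 : 0 ≤ ρ) (hρ1 : ρ ≤ 1)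
    {n m : ℕ} (x : Fin n → X) (y : Fin m → X)
    (θ : Finset (Fin n × Fin m)) (hθ : IsAssign θ) :
    0 ≤ Fcost db c p x y θ + c ^ p * (ρ * m + (1 - ρ) * n) := by
  have hcp : (0:ℝ) ≤ c ^ p := Real.rpow_nonneg hc.le p
  have hS : (0:ℝ) ≤ ∑ ij ∈ θ, db (x ij.1) (y ij.2) ^ p :=
    Finset.sum_nonneg fun ij _ => Real.rpow_nonneg (hdb _ _) p
  have hn : (θ.card : ℝ) ≤ n := by exact_mod_cast assign_card_le_left θ hθ
  have hm : (θ.card : ℝ) ≤ m := by exact_mod_cast assign_card_le_right θ hθ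
  have h1 : 0 ≤ ρ * c ^ p * ((m:ℝ) - θ.card) :=
    mul_nonneg (mul_nonneg hρ0 hcp) (by linarith)
  have h2 : 0 ≤ (1 - ρ) * c ^ p * ((n:ℝ) - θ.card) :=
    mul_nonneg (mul_nonneg (by linarith) hcp) (by linarith)
  unfold Fcost
  nlinarith [h1, h2, hS]

lemma gospa_eq_inf' {X : Type*} (db : X → X → ℝ) (hdb : ∀ a b, 0 ≤ db a b)
    (c p ρ : ℝ) (hc : 0 < c) (hp0 : 0 < p) (hρ0 : 0 ≤ ρ) (hρ1 : ρ ≤ 1)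
    {n m : ℕ} (x : Fin n → X) (y : Fin m → X) :
    gospa db c p ρ x y
      = ((Tset n m).inf' (Tset_ne n m) (Fcost db c p x y)
          + c ^ p * (ρ * m + (1 - ρ) * n)) ^ (1 / p) := by
  have h0 : gospa db c p ρ x y
      = (Tset n m).inf' (Tset_ne n m)
        (fun θ => ((∑ ij ∈ θ, db (x ij.1) (y ij.2) ^ p)
          + ρ * c ^ p * ((m : ℝ) - θ.card)
          + (1 - ρ) * c ^ p * ((n : ℝ) - θ.card)) ^ (1 / p)) := rfl
  rw [h0]
  have h1 : (Tset n m).inf' (Tset_ne n m)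
        (fun θ => ((∑ ij ∈ θ, db (x ij.1) (y ij.2) ^ p)
          + ρ * c ^ p * ((m : ℝ) - θ.card)
          + (1 - ρ) * c ^ p * ((n : ℝ) - θ.card)) ^ (1 / p))
      = (Tset n m).inf' (Tset_ne n m)
        (fun θ => (Fcost db c p x y θ + c ^ p * (ρ * m + (1 - ρ) * n)) ^ (1 / p)) := by
    apply Finset.inf'_congr _ rfl
    intro θ _
    congr 1
    unfold Fcost
    ring
  rw [h1, my_inf'_rpow _ _ _ (fun θ hθ => cost_nonneg db hdb c p ρ hc hρ0 hρ1 x y θ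
      ((mem_Tset θ).1 hθ)) (1/p) (by positivity), my_inf'_add_const]
lemma inf_Fcost_swap_le {X : Type*} (db : X → X → ℝ) (hsymm : ∀ a b : X, db a b = db b a)
    (c p : ℝ) {n m : ℕ} (x : Fin n → X) (y : Fin m → X) :
    (Tset m n).inf' (Tset_ne m n) (Fcost db c p y x)
      ≤ (Tset n m).inf' (Tset_ne n m) (Fcost db c p x y) := by
  classical
  obtain ⟨θ, hθT, hθe⟩ := Finset.exists_mem_eq_inf' (Tset_ne n m) (Fcost db c p x y)
  rw [hθe]
  have hass : IsAssign θ := (mem_Tset θ).1 hθT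
  have hmem : θ.image Prod.swap ∈ Tset m n := by
    rw [mem_Tset]
    rintro a ha b hb hab
    simp only [Finset.mem_image] at ha hb
    obtain ⟨a', ha', rfl⟩ := ha
    obtain ⟨b', hb', rfl⟩ := hb
    have := hass a' ha' b' hb' (by simpa [or_comm] using hab)
    rw [this]
  refine le_trans (Finset.inf'_le _ hmem) (le_of_eq ?_)
  unfold Fcost
  rw [Finset.sum_image (fun a _ b _ h => Prod.swap_injective h),
      Finset.card_image_of_injective θ Prod.swap_injective]
  congr 1
  exact Finset.sum_congr rfl fun ij _ => by simp [hsymm]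

lemma inf_Fcost_add_nonneg {X : Type*} (db : X → X → ℝ) (hdb : ∀ a b, 0 ≤ db a b)
    (c p ρ : ℝ) (hc : 0 < c) (hρ0 : 0 ≤ ρ) (hρ1 : ρ ≤ 1)
    {n m : ℕ} (x : Fin n → X) (y : Fin m → X) :
    0 ≤ (Tset n m).inf' (Tset_ne n m) (Fcost db c p x y)
        + c ^ p * (ρ * m + (1 - ρ) * n) := by
  obtain ⟨θ, hθT, hθe⟩ := Finset.exists_mem_eq_inf' (Tset_ne n m) (Fcost db c p x y)
  rw [hθe]
  exact cost_nonneg db hdb c p ρ hc hρ0 hρ1 x y θ ((mem_Tset θ).1 hθT)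

/-- Symmetrisation of the GOSPA quasi-metric: the GOSPA metric (`ρ = 1/2`) is
recovered by averaging the quasi-metric in both directions. -/
theorem gospa_symmetrisation {X : Type*} (db : X → X → ℝ) (hdb : IsQuasiMetric db)
    (hsymm : ∀ a b : X, db a b = db b a)
    (c p ρ : ℝ) (hc : 0 < c) (hp : 1 ≤ p) (hρ : ρ ∈ Set.Ioo (0 : ℝ) 1)
    {n m : ℕ} (x : Fin n → X) (y : Fin m → X) :
    gospa db c p (1 / 2) x y
      = (1 / 2 * (gospa db c p ρ x y ^ p + gospa db c p ρ y x ^ p)) ^ (1 / p) := by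
  have hp0 : (0:ℝ) < p := lt_of_lt_of_le one_pos hp
  have hdb0 : ∀ a b, 0 ≤ db a b := hdb.1
  obtain ⟨hρ0, hρ1⟩ := hρ
  rw [gospa_eq_inf' db hdb0 c p (1/2) hc hp0 (by norm_num) (by norm_num) x y,
      gospa_eq_inf' db hdb0 c p ρ hc hp0 hρ0.le hρ1.le x y,
      gospa_eq_inf' db hdb0 c p ρ hc hp0 hρ0.le hρ1.le y x]
  have hswap : (Tset m n).inf' (Tset_ne m n) (Fcost db c p y x)
      = (Tset n m).inf' (Tset_ne n m) (Fcost db c p x y) :=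
    le_antisymm (inf_Fcost_swap_le db hsymm c p x y)
      (inf_Fcost_swap_le db hsymm c p y x)
  have h1 : 0 ≤ (Tset n m).inf' (Tset_ne n m) (Fcost db c p x y)
      + c ^ p * (ρ * m + (1 - ρ) * n) :=
    inf_Fcost_add_nonneg db hdb0 c p ρ hc hρ0.le hρ1.le x y
  have h2 := inf_Fcost_add_nonneg db hdb0 c p ρ hc hρ0.le hρ1.le y x
  rw [hswap] at h2
  rw [hswap, one_div p, Real.rpow_inv_rpow h1 hp0.ne', Real.rpow_inv_rpow h2 hp0.ne']
  congr 1
  ring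
end

section
/- Composition of relaxed assignment matrices stays in the polytope: if W_{XZ} is an (n_X+1)×(n_Z+1) matrix and W_{ZY} is an (n_Z+1)×(n_Y+1) matrix, both with nonnegative entries, unit row sums for non-dummy rows, unit column sums for non-dummy columns, and zero dummy-dummy entry, then the matrix W_{XY} defined by W_{XY}(i,j) = ∑_{l=1}^{n_Z} W_{XZ}(i,l) W_{ZY}(l,j) for i ≤ n_X, j ≤ n_Y, with W_{XY}(i, n_Y+1) = 1 − ∑_{j=1}^{n_Y} W_{XY}(i,j) for i ≤ n_X, W_{XY}(n_X+1, j) = 1 − ∑_{i=1}^{n_X} W_{XY}(i,j) for j ≤ n_Y, and W_{XY}(n_X+1, n_Y+1) = 0, has all entries nonnegative and satisfies the same row/column-sum constraints. -/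
open Finset

/-- The `p`-th power of the base-case GOSPA quasi-metric between at-most-one-element
sets: `min(c, db)^p` if both exist, `ρ c^p` if only the second exists, `(1−ρ) c^p`
if only the first exists, `0` if neither exists. -/
noncomputable def pairD {X : Type*} (db : X → X → ℝ) (c p ρ : ℝ) :
    Option X → Option X → ℝ
  | some a, some b => min c (db a b) ^ p
  | none, some _ => ρ * c ^ p
  | some _, none => (1 - ρ) * c ^ p
  | none, none => 0

/-- Extend a family of `n` at-most-one-element sets with a dummy empty set at
index `n`. -/
def extOpt {X : Type*} {n : ℕ} (xs : Fin n → Option X) : Fin (n + 1) → Option X :=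
  fun i => if h : (i : ℕ) < n then xs ⟨i, h⟩ else none

/-- The relaxed assignment polytope: nonnegative entries, unit column sums for
non-dummy columns, unit row sums for non-dummy rows, and zero dummy-dummy entry. -/
def InPolytope {nX nY : ℕ} (W : Fin (nX + 1) → Fin (nY + 1) → ℝ) : Prop :=
  (∀ i j, 0 ≤ W i j) ∧
  (∀ j : Fin nY, ∑ i, W i j.castSucc = 1) ∧
  (∀ i : Fin nX, ∑ j, W i.castSucc j = 1) ∧
  W (Fin.last nX) (Fin.last nY) = 0

/-- Composition of relaxed assignment matrices stays in the polytope: composing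
`W₁` (sizes `(nX, nZ)`) with `W₂` (sizes `(nZ, nY)`) over the non-dummy indices of
`Z`, and completing the dummy row/column so that row and column sums are one,
yields a matrix in the `(nX, nY)` polytope. -/
theorem composition_mem_polytope {nX nZ nY : ℕ}
    (W₁ : Fin (nX + 1) → Fin (nZ + 1) → ℝ) (W₂ : Fin (nZ + 1) → Fin (nY + 1) → ℝ)
    (h₁ : InPolytope W₁) (h₂ : InPolytope W₂) :
    InPolytope (fun (i : Fin (nX + 1)) (j : Fin (nY + 1)) =>
      if _ : (i : ℕ) < nX then
        if _ : (j : ℕ) < nY then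
          ∑ l : Fin nZ, W₁ i l.castSucc * W₂ l.castSucc j
        else
          1 - ∑ j' : Fin nY, ∑ l : Fin nZ, W₁ i l.castSucc * W₂ l.castSucc j'.castSucc
      else
        if _ : (j : ℕ) < nY then
          1 - ∑ i' : Fin nX, ∑ l : Fin nZ, W₁ i'.castSucc l.castSucc * W₂ l.castSucc j
        else 0) := by

  obtain ⟨h₁0, h₁c, h₁r, h₁d⟩ := h₁
  obtain ⟨h₂0, h₂c, h₂r, h₂d⟩ := h₂
  have hr₁ : ∀ i : Fin nX, ∑ l : Fin nZ, W₁ i.castSucc l.castSucc ≤ 1 := by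
    intro i
    have h := h₁r i
    rw [Fin.sum_univ_castSucc] at h
    nlinarith [h₁0 i.castSucc (Fin.last nZ)]
  have hr₂ : ∀ l : Fin nZ, ∑ j : Fin nY, W₂ l.castSucc j.castSucc ≤ 1 := by
    intro l
    have h := h₂r l
    rw [Fin.sum_univ_castSucc] at h
    nlinarith [h₂0 l.castSucc (Fin.last nY)]
  have hc₂ : ∀ j : Fin nY, ∑ l : Fin nZ, W₂ l.castSucc j.castSucc ≤ 1 := by
    intro j
    have h := h₂c j
    rw [Fin.sum_univ_castSucc] at h
    nlinarith [h₂0 (Fin.last nZ) j.castSucc]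
  have hc₁ : ∀ l : Fin nZ, ∑ i : Fin nX, W₁ i.castSucc l.castSucc ≤ 1 := by
    intro l
    have h := h₁c l
    rw [Fin.sum_univ_castSucc] at h
    nlinarith [h₁0 (Fin.last nX) l.castSucc]
  refine ⟨?_, ?_, ?_, ?_⟩
  · intro i j
    by_cases hi : (i : ℕ) < nX
    · by_cases hj : (j : ℕ) < nY
      · simp only [dif_pos hi, dif_pos hj]
        exact Finset.sum_nonneg fun l _ => mul_nonneg (h₁0 _ _) (h₂0 _ _)
      · simp only [dif_pos hi, dif_neg hj]
        have hi' : i = (⟨(i : ℕ), hi⟩ : Fin nX).castSucc := by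
          apply Fin.ext; rfl
        have key : ∑ j' : Fin nY, ∑ l : Fin nZ,
            W₁ i l.castSucc * W₂ l.castSucc j'.castSucc ≤ 1 := by
          rw [Finset.sum_comm]
          calc ∑ l : Fin nZ, ∑ j' : Fin nY, W₁ i l.castSucc * W₂ l.castSucc j'.castSucc
              = ∑ l : Fin nZ, W₁ i l.castSucc * ∑ j' : Fin nY, W₂ l.castSucc j'.castSucc := by
                simp [Finset.mul_sum]
            _ ≤ ∑ l : Fin nZ, W₁ i l.castSucc * 1 :=
                Finset.sum_le_sum fun l _ =>
                  mul_le_mul_of_nonneg_left (hr₂ l) (h₁0 _ _)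
            _ = ∑ l : Fin nZ, W₁ i l.castSucc := by simp
            _ ≤ 1 := by rw [hi']; exact hr₁ _
        linarith
    · by_cases hj : (j : ℕ) < nY
      · simp only [dif_neg hi, dif_pos hj]
        have key : ∑ i' : Fin nX, ∑ l : Fin nZ,
            W₁ i'.castSucc l.castSucc * W₂ l.castSucc j ≤ 1 := by
          have hj' : j = (⟨(j : ℕ), hj⟩ : Fin nY).castSucc := by
            apply Fin.ext; rfl
          rw [Finset.sum_comm]
          calc ∑ l : Fin nZ, ∑ i' : Fin nX, W₁ i'.castSucc l.castSucc * W₂ l.castSucc j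
              = ∑ l : Fin nZ, (∑ i' : Fin nX, W₁ i'.castSucc l.castSucc) * W₂ l.castSucc j := by
                simp [Finset.sum_mul]
            _ ≤ ∑ l : Fin nZ, 1 * W₂ l.castSucc j :=
                Finset.sum_le_sum fun l _ =>
                  mul_le_mul_of_nonneg_right (hc₁ l) (h₂0 _ _)
            _ = ∑ l : Fin nZ, W₂ l.castSucc j := by simp
            _ ≤ 1 := by rw [hj']; exact hc₂ _
        linarith
      · simp only [dif_neg hi, dif_neg hj]
        exact le_refl 0
  · intro j
    rw [Fin.sum_univ_castSucc]
    simp only [Fin.coe_castSucc, Fin.is_lt, dif_pos, Fin.val_last, lt_irrefl, dif_neg,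
      not_false_iff]
    ring
  · intro i
    rw [Fin.sum_univ_castSucc]
    simp only [Fin.coe_castSucc, Fin.is_lt, dif_pos, Fin.val_last, lt_irrefl, dif_neg,
      not_false_iff]
    ring
  · simp [Fin.val_last]
end
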